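/- arXiv:2501.06709 — 2 statements merged into one kernel-verified Lean document; each statement's English description precedes it below -/
import Mathlib

section
/- Assign to each item a weight as follows: weight 1 to a 'single' L-item (size in (C/2, C]), weight 5/6 to a 'combined' L-item (size in (C/2, C]), weight 1/2 to an M-item (size in (C/3, C/2]), weight 1/3 to an S-item (size in (C/4, C/3]), and weight 0 to a T-item (size in (C/8, C/4]). Then for every feasible bin of capacity C (a multiset of items with total size at most C), the total weight of items in the bin is at most 4/3. -/
open Classical Finset in
lemma card_mul_lt_of_sum {ι : Type*} (s : Finset ι) (f : ι → ℝ) (c B : ℝ)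
    (hB : 0 < B) (h : ∀ i ∈ s, c < f i) (hsum : ∑ i ∈ s, f i ≤ B) :
    (s.card : ℝ) * c < B := by
  rcases s.eq_empty_or_nonempty with rfl | hne
  · simpa using hB
  · have h1 : ∑ _i ∈ s, c < ∑ i ∈ s, f i := Finset.sum_lt_sum_of_nonempty hne h
    have h2 : ∑ _i ∈ s, c = (s.card : ℝ) * c := by
      simp [Finset.sum_const, nsmul_eq_mul]
    linarith


open Classical in
/-- Weight assignment: single L-item (size in `(C/2, C]`) gets 1, combined
L-item gets 5/6, M-item (size in `(C/3, C/2]`) gets 1/2, S-item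
(size in `(C/4, C/3]`) gets 1/3, and T-item (size in `(C/8, C/4]`) gets 0.
For every feasible bin of capacity `C`, where any L-item sharing the bin with
an M- or S-item is labeled combined, the total weight is at most `4/3`. -/
theorem bin_weight_le (C : ℝ) (hC : 0 < C) (ι : Type*) [Fintype ι]
    (size : ι → ℝ) (combined : ι → Bool)
    (hsize : ∀ i, C / 8 < size i ∧ size i ≤ C)
    (hfeas : ∑ i, size i ≤ C)
    (hsingle : ∀ i, C / 2 < size i → combined i = false →
      ∀ j, j ≠ i → ¬ (C / 4 < size j ∧ size j ≤ C / 2)) :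
    ∑ i, (if C / 2 < size i then (if combined i then (5/6 : ℝ) else 1)
          else if C / 3 < size i then 1/2
          else if C / 4 < size i then 1/3 else 0) ≤ 4/3 := by
  have hpos : ∀ i, 0 < size i := fun i => lt_trans (by linarith) (hsize i).1
  set L : Finset ι := Finset.univ.filter (fun i => C / 2 < size i) with hL
  set M : Finset ι := Finset.univ.filter (fun i => C / 3 < size i ∧ size i ≤ C / 2) with hM
  set S : Finset ι := Finset.univ.filter (fun i => C / 4 < size i ∧ size i ≤ C / 3) with hS
  have hdecomp : ∀ i : ι,
      (if C / 2 < size i then (if combined i then (5/6 : ℝ) else 1)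
          else if C / 3 < size i then 1/2
          else if C / 4 < size i then 1/3 else 0)
      = (if C / 2 < size i then (if combined i then (5/6 : ℝ) else 1) else 0)
        + (if C / 3 < size i ∧ size i ≤ C / 2 then (1/2 : ℝ) else 0)
        + (if C / 4 < size i ∧ size i ≤ C / 3 then (1/3 : ℝ) else 0) := by
    intro i
    by_cases h1 : C / 2 < size i
    · have hM' : ¬(C / 3 < size i ∧ size i ≤ C / 2) := fun h => absurd h1 (not_lt.mpr h.2)
      have hS' : ¬(C / 4 < size i ∧ size i ≤ C / 3) := fun h => by
        have := h.2; linarith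
      rw [if_pos h1, if_pos h1, if_neg hM', if_neg hS', add_zero, add_zero]
    · have h1' : size i ≤ C / 2 := not_lt.mp h1
      rw [if_neg h1, if_neg h1]
      by_cases h2 : C / 3 < size i
      · have hS' : ¬(C / 4 < size i ∧ size i ≤ C / 3) := fun h => absurd h2 (not_lt.mpr h.2)
        rw [if_pos h2, if_pos (show C / 3 < size i ∧ size i ≤ C / 2 from ⟨h2, h1'⟩),
          if_neg hS', zero_add, add_zero]
      · have h2' : size i ≤ C / 3 := not_lt.mp h2
        have hM' : ¬(C / 3 < size i ∧ size i ≤ C / 2) := fun h => absurd h.1 h2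
        rw [if_neg h2, if_neg hM', add_zero]
        by_cases h3 : C / 4 < size i
        · rw [if_pos h3, if_pos (show C / 4 < size i ∧ size i ≤ C / 3 from ⟨h3, h2'⟩),
            zero_add]
        · have hS' : ¬(C / 4 < size i ∧ size i ≤ C / 3) := fun h => absurd h.1 h3
          rw [if_neg h3, if_neg hS', add_zero]
  rw [Finset.sum_congr rfl (fun i _ => hdecomp i)]
  rw [Finset.sum_add_distrib, Finset.sum_add_distrib]
  rw [← Finset.sum_filter, ← Finset.sum_filter, ← Finset.sum_filter]
  rw [← hL, ← hM, ← hS]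
  rw [Finset.sum_const, Finset.sum_const, nsmul_eq_mul, nsmul_eq_mul]
  have hsub : ∀ s : Finset ι, ∑ i ∈ s, size i ≤ C := by
    intro s
    calc ∑ i ∈ s, size i ≤ ∑ i, size i :=
          Finset.sum_le_sum_of_subset_of_nonneg (Finset.subset_univ s)
            (fun i _ _ => (hpos i).le)
      _ ≤ C := hfeas
  have hMS_disj : Disjoint M S := by
    rw [Finset.disjoint_left]
    intro a ha hb
    simp only [hM, hS, Finset.mem_filter] at ha hb
    linarith [ha.2.1, hb.2.2]
  have hMS_mem : ∀ i ∈ M ∪ S, C / 4 < size i := by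
    intro i hi
    rcases Finset.mem_union.mp hi with h | h <;>
      simp only [hM, hS, Finset.mem_filter] at h <;> linarith [h.2.1]
  have hcardMS : (M.card : ℝ) + S.card ≤ 3 := by
    have hx := card_mul_lt_of_sum (M ∪ S) size (C / 4) C hC hMS_mem (hsub _)
    rw [Finset.card_union_of_disjoint hMS_disj] at hx
    have hx2 : ((M.card + S.card : ℕ) : ℝ) * (C / 4) < 4 * (C / 4) := by
      push_cast; push_cast at hx; linarith
    have hx3 : ((M.card + S.card : ℕ) : ℝ) < 4 :=
      lt_of_mul_lt_mul_right hx2 (by positivity)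
    have hx4 : M.card + S.card < 4 := by exact_mod_cast hx3
    have hx5 : M.card + S.card ≤ 3 := by omega
    push_cast [← Nat.cast_add]
    exact_mod_cast hx5
  have hcardM : (M.card : ℝ) ≤ 2 := by
    have hx := card_mul_lt_of_sum M size (C / 3) C hC
      (fun i hi => by simp only [hM, Finset.mem_filter] at hi; exact hi.2.1) (hsub _)
    have hx2 : (M.card : ℝ) * (C / 3) < 3 * (C / 3) := by linarith
    have hx3 : (M.card : ℝ) < 3 := lt_of_mul_lt_mul_right hx2 (by positivity)
    have hx4 : M.card < 3 := by exact_mod_cast hx3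
    have hx5 : M.card ≤ 2 := by omega
    exact_mod_cast hx5
  rcases L.eq_empty_or_nonempty with hLe | hLne
  · rw [hLe]
    simp only [Finset.sum_empty, zero_add]
    push_cast at hcardMS
    nlinarith [Nat.cast_nonneg (α := ℝ) S.card]
  · have hLcard : L.card = 1 := by
      have h1 : (L.card : ℝ) * (C / 2) < C := card_mul_lt_of_sum L size (C / 2) C hC
        (fun i hi => by simp only [hL, Finset.mem_filter] at hi; exact hi.2) (hsub _)
      have h2 : (L.card : ℝ) * (C / 2) < 2 * (C / 2) := by linarith
      have h3 : (L.card : ℝ) < 2 := lt_of_mul_lt_mul_right h2 (by positivity)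
      have h4 : L.card < 2 := by exact_mod_cast h3
      have h5 : 0 < L.card := Finset.card_pos.mpr hLne
      omega
    obtain ⟨i0, hi0⟩ := Finset.card_eq_one.mp hLcard
    have hi0L : C / 2 < size i0 := by
      have hm : i0 ∈ L := by simp [hi0]
      simp only [hL, Finset.mem_filter] at hm
      exact hm.2
    rw [hi0, Finset.sum_singleton]
    by_cases hcomb : combined i0
    · rw [if_pos hcomb]
      have hsub2 : M ∪ S ⊆ Finset.univ.erase i0 := by
        intro j hj
        refine Finset.mem_erase.mpr ⟨?_, Finset.mem_univ j⟩
        intro hji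
        subst hji
        rcases Finset.mem_union.mp hj with h | h <;>
          simp only [hM, hS, Finset.mem_filter] at h <;> linarith [h.2.2]
      have hsum2 : ∑ i ∈ M ∪ S, size i ≤ C / 2 := by
        have he : ∑ i ∈ Finset.univ.erase i0, size i + size i0 = ∑ i, size i :=
          Finset.sum_erase_add _ _ (Finset.mem_univ i0)
        have h1 : ∑ i ∈ M ∪ S, size i ≤ ∑ i ∈ Finset.univ.erase i0, size i :=
          Finset.sum_le_sum_of_subset_of_nonneg hsub2 (fun i _ _ => (hpos i).le)
        linarith
      have hx := card_mul_lt_of_sum (M ∪ S) size (C / 4) (C / 2) (by linarith) hMS_mem hsum2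
      rw [Finset.card_union_of_disjoint hMS_disj] at hx
      have hx2 : ((M.card + S.card : ℕ) : ℝ) * (C / 4) < 2 * (C / 4) := by
        push_cast; push_cast at hx; linarith
      have hx3 : ((M.card + S.card : ℕ) : ℝ) < 2 :=
        lt_of_mul_lt_mul_right hx2 (by positivity)
      have hx4 : M.card + S.card < 2 := by exact_mod_cast hx3
      have hx5 : M.card + S.card ≤ 1 := by omega
      have hx6 : (M.card : ℝ) + S.card ≤ 1 := by exact_mod_cast hx5
      have h0M : (0:ℝ) ≤ M.card := Nat.cast_nonneg _
      have h0S : (0:ℝ) ≤ S.card := Nat.cast_nonneg _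
      linarith
    · rw [if_neg hcomb]
      have hcomb' : combined i0 = false := by simpa using hcomb
      have hMe : M = ∅ := by
        rw [Finset.eq_empty_iff_forall_notMem]
        intro j hj
        simp only [hM, Finset.mem_filter] at hj
        have hji : j ≠ i0 := fun h => by rw [h] at hj; linarith [hj.2.2]
        exact hsingle i0 hi0L hcomb' j hji ⟨by linarith [hj.2.1], hj.2.2⟩
      have hSe : S = ∅ := by
        rw [Finset.eq_empty_iff_forall_notMem]
        intro j hj
        simp only [hS, Finset.mem_filter] at hj
        have hji : j ≠ i0 := fun h => by rw [h] at hj; linarith [hj.2.2]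
        exact hsingle i0 hi0L hcomb' j hji ⟨hj.2.1, by linarith [hj.2.2]⟩
      rw [hMe, hSe]
      norm_num
end

section
/- Let a packing of items into bins satisfy: every M-bin contains exactly two M-items (weight 1/2 each), every S-bin contains exactly three S-items (weight 1/3 each), every bin containing a single L-item has weight 1, and at least ⌊𝒞/2⌋ of the 𝒞 combined L-items (weight 5/6) are paired with an M- or S-item (weight ≥ 1/3). Then the total weight of all items is at least the number of bins minus a constant. -/
/-- (Lemma 1.) If every M-bin contains two M-items (weight 1/2 each), every
S-bin contains three S-items (weight 1/3 each), every bin with a single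
L-item has weight 1, and at least `⌊k/2⌋` of the `k` combined L-items (weight
5/6) are paired with an M- or S-item (weight at least 1/3), then the total
weight `W` is at least the number of bins `m + s + l + k` minus a constant `c`. -/
theorem bins_le_weight_add_const :
    ∃ c : ℝ, ∀ (m s l k : ℕ) (W : ℝ),
      (m : ℝ) * 1 + (s : ℝ) * 1 + (l : ℝ) * 1
        + ((k / 2 : ℕ) : ℝ) * (5/6 + 1/3)
        + ((k : ℝ) - ((k / 2 : ℕ) : ℝ)) * (5/6) ≤ W →
      ((m + s + l + k : ℕ) : ℝ) ≤ W + c := by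
  refine ⟨1/6, fun m s l k W h => ?_⟩
  have hk : k ≤ 2 * (k / 2) + 1 := by omega
  have hk' : (k : ℝ) ≤ 2 * ((k / 2 : ℕ) : ℝ) + 1 := by exact_mod_cast hk
  push_cast
  linarith
end
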